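/- For an n-dimensional linear system with diagonalizable matrix A = E Λ E⁻¹ (Λ = diag(λ₁,…,λ_n), distinct exp(λₖτ)), a generic linear observable φ, and p = n delays, the linear sampling map S : ℂⁿ → ℂⁿ, (Sx)_j = φ(exp(jτA)x), is a linear isomorphism; i.e., delay embedding of a linear system with p = n recovers the entire state space. -/

import Mathlib

open NormedSpace

/-- The exponential of a matrix acts on an eigenvector by `Complex.exp` of the eigenvalue. -/
lemma exp_mulVec_eigenvector {n : ℕ} (M : Matrix (Fin n) (Fin n) ℂ) (v : Fin n → ℂ) (μ : ℂ)
    (h : M.mulVec v = μ • v) :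
    (exp M).mulVec v = Complex.exp μ • v := by
  letI : SeminormedRing (Matrix (Fin n) (Fin n) ℂ) := Matrix.linftyOpSemiNormedRing
  letI : NormedRing (Matrix (Fin n) (Fin n) ℂ) := Matrix.linftyOpNormedRing
  letI : NormedAlgebra ℂ (Matrix (Fin n) (Fin n) ℂ) := Matrix.linftyOpNormedAlgebra
  have hpow : ∀ m : ℕ, (M ^ m).mulVec v = μ ^ m • v := by
    intro m
    induction m with
    | zero => simp [Matrix.one_mulVec]
    | succ m ih =>
      rw [pow_succ, ← Matrix.mulVec_mulVec, h, Matrix.mulVec_smul, ih, smul_smul, pow_succ,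
        mul_comm]
  let f : Matrix (Fin n) (Fin n) ℂ →ₗ[ℂ] (Fin n → ℂ) :=
    { toFun := fun N => N.mulVec v
      map_add' := fun N₁ N₂ => Matrix.add_mulVec N₁ N₂ v
      map_smul' := fun c N => Matrix.smul_mulVec c N v }
  let F : Matrix (Fin n) (Fin n) ℂ →L[ℂ] (Fin n → ℂ) := f.toContinuousLinearMap
  have hs : Summable fun m : ℕ => (m.factorial : ℂ)⁻¹ • M ^ m := expSeries_summable' M
  have key : F (exp M) = ∑' m : ℕ, (m.factorial : ℂ)⁻¹ • (M ^ m).mulVec v := by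
    rw [exp_eq_tsum (𝕂 := ℂ), F.map_tsum hs]
    congr 1
    funext m
    simp [F, f]
  have : (exp M).mulVec v = ∑' m : ℕ, (m.factorial : ℂ)⁻¹ • (M ^ m).mulVec v := key
  rw [this]
  have hsum : Summable fun m : ℕ => (m.factorial : ℂ)⁻¹ • μ ^ m := expSeries_summable' μ
  calc (∑' m : ℕ, (m.factorial : ℂ)⁻¹ • (M ^ m).mulVec v)
      = ∑' m : ℕ, ((m.factorial : ℂ)⁻¹ * μ ^ m) • v := by
        congr 1; funext m; rw [hpow m, smul_smul]
    _ = (∑' m : ℕ, (m.factorial : ℂ)⁻¹ * μ ^ m) • v := by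
        rw [Summable.tsum_smul_const]
        simpa [smul_eq_mul] using hsum
    _ = Complex.exp μ • v := by
        congr 1
        rw [Complex.exp_eq_exp_ℂ, exp_eq_tsum (𝕂 := ℂ)]
        simp [smul_eq_mul]

/-- Delay embedding of a diagonalizable linear system with `p = n` delays and a generic
linear observable `φ` is a linear isomorphism of the state space. -/
theorem linear_delay_embedding_bijective {n : ℕ}
    (A : Matrix (Fin n) (Fin n) ℂ)
    (e : Fin n → (Fin n → ℂ)) (he : LinearIndependent ℂ e)
    (lam : Fin n → ℂ) (hAe : ∀ k, A.mulVec (e k) = lam k • e k)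
    (τ : ℝ) (hinj : Function.Injective fun k => Complex.exp (lam k * τ))
    (φ : (Fin n → ℂ) →ₗ[ℂ] ℂ) (hφ : ∀ k, φ (e k) ≠ 0)
    (S : (Fin n → ℂ) →ₗ[ℂ] (Fin n → ℂ))
    (hS : ∀ x (j : Fin n),
      S x j = φ ((NormedSpace.exp ((((j : ℕ) : ℂ) * (τ : ℂ)) • A)).mulVec x)) :
    Function.Bijective S := by
  set z : Fin n → ℂ := fun k => Complex.exp (lam k * τ) with hz
  -- the image of the eigenbasis
  have hSe : ∀ k, S (e k) = fun j : Fin n => φ (e k) * z k ^ (j : ℕ) := by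
    intro k
    funext j
    rw [hS]
    have heig : ((((j : ℕ) : ℂ) * (τ : ℂ)) • A).mulVec (e k)
        = ((((j : ℕ) : ℂ) * (τ : ℂ)) * lam k) • e k := by
      rw [Matrix.smul_mulVec, hAe, smul_smul]
    rw [exp_mulVec_eigenvector _ _ _ heig, map_smul, smul_eq_mul]
    have : Complex.exp ((((j : ℕ) : ℂ) * (τ : ℂ)) * lam k) = z k ^ (j : ℕ) := by
      rw [hz]
      rw [show (((j : ℕ) : ℂ) * (τ : ℂ)) * lam k = ((j : ℕ) : ℂ) * (lam k * τ) by ring]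
      exact Complex.exp_nat_mul _ _
    rw [this, mul_comm]
  -- the images form the rows of a nonsingular matrix
  have hdet : (Matrix.of fun k j : Fin n => φ (e k) * z k ^ (j : ℕ)).det ≠ 0 := by
    have h1 : (Matrix.of fun k j : Fin n => φ (e k) * z k ^ (j : ℕ))
        = Matrix.of fun k j : Fin n => φ (e k) * Matrix.vandermonde z k j := rfl
    rw [h1, Matrix.det_mul_column]
    exact mul_ne_zero (Finset.prod_ne_zero_iff.mpr fun k _ => hφ k)
      (Matrix.det_vandermonde_ne_zero_iff.mpr hinj)
  have hli : LinearIndependent ℂ fun k => S (e k) := by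
    have := Matrix.linearIndependent_rows_iff_isUnit.mpr
      ((Matrix.isUnit_iff_isUnit_det _).mpr (isUnit_iff_ne_zero.mpr hdet))
    convert this using 1
    funext k
    rw [hSe k]
    rfl
    rfl
  -- surjectivity
  have hsurj : Function.Surjective S := by
    rw [← LinearMap.range_eq_top]
    have hcard : Fintype.card (Fin n) = Module.finrank ℂ (Fin n → ℂ) := by simp
    have hspan : Submodule.span ℂ (Set.range fun k => S (e k)) = ⊤ :=
      hli.span_eq_top_of_card_eq_finrank' hcard
    rw [eq_top_iff, ← hspan]
    refine Submodule.span_le.mpr ?_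
    rintro _ ⟨k, rfl⟩
    exact ⟨e k, rfl⟩
  exact ⟨(LinearMap.injective_iff_surjective (f := S)).mpr hsurj, hsurj⟩
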